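/- arXiv:2402.07704 — 2 statements merged into one kernel-verified Lean document; each statement's English description precedes it below -/
import Mathlib

section
/- The formula (λφφ̂)·(α, η) = (α', η'), where η'(g) = ι_{λ(g)} ∘ φ ∘ η(φ̂⁻¹(g)) ∘ φ⁻¹ and α'(g,h) = λ(g) · φ(η(φ̂⁻¹(g))(φ⁻¹(λ(h)))) · φ(α(φ̂⁻¹(g), φ̂⁻¹(h))) · λ(gh)⁻¹, defines a group action of K = (R*)^G ⋊ (Aut_F(R) × Aut(G)) on the set Γ of compatible pairs (α, η); in particular (k₁k₂)·(α,η) = k₁·(k₂·(α,η)) for all k₁, k₂ ∈ K. -/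
/-- The inner automorphism `ι_r : s ↦ r s r⁻¹`. -/
def innerAut (F : Type*) {R : Type*} [Field F] [Ring R] [Algebra F R] (r : Rˣ) :
    R ≃ₐ[F] R where
  toFun s := ↑r * s * ↑r⁻¹
  invFun s := ↑r⁻¹ * s * ↑r
  left_inv s := by simp [mul_assoc]
  right_inv s := by simp [mul_assoc]
  map_mul' x y := by simp [mul_assoc]
  map_add' x y := by simp [mul_add, add_mul]
  commutes' c := by
    show ↑r * algebraMap F R c * ↑r⁻¹ = algebraMap F R c
    rw [← Algebra.commutes c (r : R), mul_assoc, Units.mul_inv, mul_one]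

/-- A pair `(α, η)` belongs to `Γ` (is compatible) if
`α(g₁,g₂)α(g₁g₂,g₃) = η(g₁)(α(g₂,g₃))α(g₁,g₂g₃)` and
`η(g₁)∘η(g₂) = ι_{α(g₁,g₂)} ∘ η(g₁g₂)`. -/
def Compatible (F : Type*) {R G : Type*} [Field F] [Ring R] [Algebra F R] [Group G]
    (α : G → G → Rˣ) (η : G → R ≃ₐ[F] R) : Prop :=
  (∀ g₁ g₂ g₃ : G,
      (α g₁ g₂ : R) * (α (g₁ * g₂) g₃ : R) = η g₁ (α g₂ g₃) * (α g₁ (g₂ * g₃) : R)) ∧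
  (∀ (g₁ g₂ : G) (r : R),
      η g₁ (η g₂ r) = (α g₁ g₂ : R) * η (g₁ * g₂) r * ((α g₁ g₂)⁻¹ : Rˣ))

/-- The `η`-component of the action of `λφφ̂ ∈ K` on `(α, η)`:
`η'(g) = ι_{λ(g)} ∘ φ ∘ η(φ̂⁻¹(g)) ∘ φ⁻¹`. -/
def actEta (F : Type*) {R G : Type*} [Field F] [Ring R] [Algebra F R] [Group G]
    (lam : G → Rˣ) (φ : R ≃ₐ[F] R) (σ : MulAut G) (η : G → R ≃ₐ[F] R) :
    G → R ≃ₐ[F] R :=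
  fun g => φ.symm.trans (((η (σ⁻¹ g)).trans φ).trans (innerAut F (lam g)))

/-- The `α`-component of the action of `λφφ̂ ∈ K` on `(α, η)`:
`α'(g,h) = λ(g) ⬝ φ(η(φ̂⁻¹(g))(φ⁻¹(λ(h)))) ⬝ φ(α(φ̂⁻¹(g), φ̂⁻¹(h))) ⬝ λ(gh)⁻¹`. -/
def actAlpha (F : Type*) {R G : Type*} [Field F] [Ring R] [Algebra F R] [Group G]
    (lam : G → Rˣ) (φ : R ≃ₐ[F] R) (σ : MulAut G) (η : G → R ≃ₐ[F] R)
    (α : G → G → Rˣ) : G → G → Rˣ :=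
  fun g h =>
    lam g *
      Units.map (MonoidHomClass.toMonoidHom φ)
        (Units.map (MonoidHomClass.toMonoidHom (η (σ⁻¹ g)))
          (Units.map (MonoidHomClass.toMonoidHom φ.symm) (lam h))) *
      Units.map (MonoidHomClass.toMonoidHom φ) (α (σ⁻¹ g) (σ⁻¹ h)) *
      (lam (g * h))⁻¹

lemma aux_inv_cancel {F R : Type*} [Field F] [Ring R] [Algebra F R]
    (φ : R ≃ₐ[F] R) (u : Rˣ) (r : R) : φ ↑u⁻¹ * (φ ↑u * r) = r := by
  rw [← mul_assoc, ← map_mul]; simp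

lemma aux_cancel_inv {F R : Type*} [Field F] [Ring R] [Algebra F R]
    (φ : R ≃ₐ[F] R) (u : Rˣ) (r : R) : φ ↑u * (φ ↑u⁻¹ * r) = r := by
  rw [← mul_assoc, ← map_mul]; simp

lemma aux_inv_cancel2 {F R : Type*} [Field F] [Ring R] [Algebra F R]
    (φ ψ : R ≃ₐ[F] R) (u : Rˣ) (r : R) :
    φ (ψ (φ.symm ↑u⁻¹)) * (φ (ψ (φ.symm ↑u)) * r) = r := by
  rw [← mul_assoc, ← map_mul, ← map_mul, ← map_mul]; simp

lemma aux_cancel_inv2 {F R : Type*} [Field F] [Ring R] [Algebra F R]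
    (φ ψ : R ≃ₐ[F] R) (u : Rˣ) (r : R) :
    φ (ψ (φ.symm ↑u)) * (φ (ψ (φ.symm ↑u⁻¹)) * r) = r := by
  rw [← mul_assoc, ← map_mul, ← map_mul, ← map_mul]; simp

/-- The formula `(λφφ̂)·(α,η) = (α',η')` defines a group action of
`K = (Rˣ)^G ⋊ (Aut_F(R) × Aut(G))` on the set `Γ` of compatible pairs: `Γ` is invariant,
the identity of `K` acts trivially, and `(k₁k₂)·(α,η) = k₁·(k₂·(α,η))`. -/
theorem stmt_7 {F R G : Type*} [Field F] [Ring R] [Algebra F R] [Group G]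
    (α : G → G → Rˣ) (η : G → R ≃ₐ[F] R) (h : Compatible F α η) :
    (∀ (lam : G → Rˣ) (φ : R ≃ₐ[F] R) (σ : MulAut G),
        Compatible F (actAlpha F lam φ σ η α) (actEta F lam φ σ η)) ∧
    (actEta F (1 : G → Rˣ) (1 : R ≃ₐ[F] R) (1 : MulAut G) η = η ∧
      actAlpha F (1 : G → Rˣ) (1 : R ≃ₐ[F] R) (1 : MulAut G) η α = α) ∧
    (∀ (lam₁ lam₂ : G → Rˣ) (φ₁ φ₂ : R ≃ₐ[F] R) (σ₁ σ₂ : MulAut G),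
        actEta F (lam₁ * fun g => Units.map (MonoidHomClass.toMonoidHom φ₁) (lam₂ (σ₁⁻¹ g)))
            (φ₁ * φ₂) (σ₁ * σ₂) η =
          actEta F lam₁ φ₁ σ₁ (actEta F lam₂ φ₂ σ₂ η) ∧
        actAlpha F (lam₁ * fun g => Units.map (MonoidHomClass.toMonoidHom φ₁) (lam₂ (σ₁⁻¹ g)))
            (φ₁ * φ₂) (σ₁ * σ₂) η α =
          actAlpha F lam₁ φ₁ σ₁ (actEta F lam₂ φ₂ σ₂ η)
            (actAlpha F lam₂ φ₂ σ₂ η α)) := by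
  obtain ⟨h1, h2⟩ := h
  refine ⟨?_, ⟨?_, ?_⟩, ?_⟩
  · intro lam φ σ
    have key : ∀ (a b c : G) (r : R),
        φ ((η a) ↑(α b c)) * (φ ↑(α a (b * c)) * r) = φ ↑(α a b) * (φ ↑(α (a * b) c) * r) := by
      intro a b c r
      rw [← mul_assoc, ← map_mul, ← h1, map_mul, mul_assoc]
    constructor
    · intro g₁ g₂ g₃
      simp [actAlpha, actEta, innerAut, mul_assoc, map_mul, Units.ext_iff,
        aux_inv_cancel, aux_cancel_inv, aux_inv_cancel2, aux_cancel_inv2, h2, key]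
    · intro g₁ g₂ r
      simp [actAlpha, actEta, innerAut, mul_assoc, map_mul, Units.ext_iff,
        aux_inv_cancel, aux_cancel_inv, h2]
  · funext g
    ext r
    simp [actEta, innerAut, AlgEquiv.aut_one]
  · funext g h'
    ext
    simp [actAlpha]
  · intro lam₁ lam₂ φ₁ φ₂ σ₁ σ₂
    constructor
    · funext g
      ext r
      simp [actEta, innerAut, mul_assoc, AlgEquiv.aut_mul, map_mul]
    · funext g h'
      ext
      simp [actAlpha, actEta, innerAut, mul_assoc, AlgEquiv.aut_mul, map_mul, Units.ext_iff,
        aux_inv_cancel]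
end

section
/- Two crossed products R^{α₁}_{η₁}G and R^{α₂}_{η₂}G are graded isomorphic if and only if there exist λ : G → R* and φ ∈ Aut_F(R) such that η₂(g) = ι_{λ(g)} ∘ φ ∘ η₁(g) ∘ φ⁻¹ and α₂(g,h) = λ(g)·φ(η₁(g)(φ⁻¹(λ(h))))·φ(α₁(g,h))·λ(gh)⁻¹ for all g,h ∈ G. -/
/-- The multiplication of the crossed product `R^α_η G`, realized on the free `R`-module
`G →₀ R` with basis `{u_g}`: `(r u_x)(s u_y) = r η(x)(s) α(x,y) u_{xy}`, where
`Finsupp.single g r` represents the element `r u_g`. -/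
noncomputable def mulCP (F : Type*) {R G : Type*} [Field F] [Ring R] [Algebra F R] [Group G]
    (α : G → G → Rˣ) (η : G → R ≃ₐ[F] R) (a b : G →₀ R) : G →₀ R :=
  a.sum fun x r => b.sum fun y s => Finsupp.single (x * y) (r * η x s * (α x y : R))

/-! A graded linear isomorphism `ψ` acts as `r u_g ↦ T_g(r) u_g` for `F`-linear bijections
`T_g : R → R`, and `ψ` is multiplicative iff
`T_{xy}(r η₁(x)(s) α₁(x,y)) = T_x(r) η₂(x)(T_y(s)) α₂(x,y)`. In a crossed product
`η(1) = ι_{α(1,1)}` and `α(1,y) = α(1,1)`, so taking `x = 1` gives `T_y(rs) = φ(r) T_y(s)` with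
`φ(r) = T_1(r α₁(1,1)⁻¹) α₂(1,1)` an algebra automorphism; hence `T_g(r) = φ(r) λ(g)⁻¹` with
`λ(g)⁻¹ = T_g(1)` a unit. For maps of this shape the multiplicativity condition unwinds exactly
to the two stated identities. -/

open Finsupp

section GradedMaps

variable {S ι M : Type*} [Semiring S] [AddCommMonoid M] [Module S M]

open Classical in
noncomputable def gradedLinearEquiv (e : ι → M ≃ₗ[S] M) : (ι →₀ M) ≃ₗ[S] (ι →₀ M) :=
  (finsuppLequivDFinsupp S).trans
    ((DFinsupp.mapRange.linearEquiv e).trans (finsuppLequivDFinsupp S).symm)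

@[simp]
lemma gradedLinearEquiv_single (e : ι → M ≃ₗ[S] M) (g : ι) (r : M) :
    gradedLinearEquiv e (single g r) = single g (e g r) := by
  classical
  simp [gradedLinearEquiv]

lemma LinearMap.apply_apply_of_graded (ψ : (ι →₀ M) →ₗ[S] (ι →₀ M))
    (hψ : ∀ g r, ∃ s, ψ (Finsupp.single g r) = Finsupp.single g s) (a : ι →₀ M) (g : ι) :
    ψ a g = ψ (Finsupp.single g (a g)) g := by
  classical
  induction a using Finsupp.induction_linear with
  | zero => simp
  | add a b iha ihb => simp [iha, ihb]
  | single h r =>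
    obtain ⟨s, hs⟩ := hψ h r
    by_cases hhg : h = g
    · subst hhg; simp
    · simp [hs, hhg]

lemma LinearEquiv.exists_components_of_graded (ψ : (ι →₀ M) ≃ₗ[S] (ι →₀ M))
    (hψ : ∀ g r, ∃ s, ψ (single g r) = single g s) :
    ∃ T : ι → M ≃ₗ[S] M, ∀ g r, ψ (single g r) = single g (T g r) := by
  let T₀ g : M →ₗ[S] M := lapply g ∘ₗ ψ.toLinearMap ∘ₗ lsingle g
  have hT₀ : ∀ g r, ψ (single g r) = single g (T₀ g r) := fun g r => by
    obtain ⟨s, hs⟩ := hψ g r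
    simp [T₀, hs]
  have hbij : ∀ g, Function.Bijective (T₀ g) := fun g => by
    refine ⟨fun r r' h => ?_, fun s => ⟨ψ.symm (single g s) g, ?_⟩⟩
    · exact single_injective g (ψ.injective (by rw [hT₀, hT₀, h]))
    · have := ψ.toLinearMap.apply_apply_of_graded hψ (ψ.symm (single g s)) g
      simp only [LinearEquiv.coe_coe, LinearEquiv.apply_symm_apply, single_eq_same] at this
      simp [T₀, ← this]
  exact ⟨fun g => LinearEquiv.ofBijective (T₀ g) (hbij g), hT₀⟩

end GradedMaps

section GradedHom

variable {F R G : Type*} [CommSemiring F] [Ring R] [Algebra F R] [Group G]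

/-- `r u_g ↦ T g r u_g` is multiplicative from `R^{α₁}_{η₁}G` to `R^{α₂}_{η₂}G`. -/
def IsGradedHomCP (α₁ : G → G → Rˣ) (η₁ : G → R ≃ₐ[F] R) (α₂ : G → G → Rˣ)
    (η₂ : G → R ≃ₐ[F] R) (T : G → R → R) : Prop :=
  ∀ (x y : G) (r s : R), T (x * y) (r * η₁ x s * α₁ x y) = T x r * η₂ x (T y s) * α₂ x y

lemma isGradedHomCP_mul_inv_iff {α₁ α₂ : G → G → Rˣ} {η₁ η₂ : G → R ≃ₐ[F] R}
    (lam : G → Rˣ) (φ : R ≃ₐ[F] R) :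
    IsGradedHomCP α₁ η₁ α₂ η₂ (fun g r => φ r * ↑(lam g)⁻¹) ↔
      (∀ (g : G) (r : R), η₂ g r = lam g * φ (η₁ g (φ.symm r)) * ↑(lam g)⁻¹) ∧
      (∀ g h : G, (α₂ g h : R) =
        lam g * φ (η₁ g (φ.symm (lam h))) * φ (α₁ g h) * ↑(lam (g * h))⁻¹) := by
  constructor
  · intro hT
    have hα : ∀ g h : G, (α₂ g h : R) =
        lam g * φ (η₁ g (φ.symm (lam h))) * φ (α₁ g h) * ↑(lam (g * h))⁻¹ := fun g h => by
      -- this choice of `s` turns the `η₂`-factor into `η₂ g 1 = 1`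
      have e := hT g h 1 (φ.symm (lam h))
      simp only [one_mul, mul_one, map_one, AlgEquiv.apply_symm_apply, Units.mul_inv,
        map_mul] at e
      rw [mul_assoc, mul_assoc, ← mul_assoc (φ _), e, Units.mul_inv_cancel_left]
    refine ⟨fun g t => ?_, hα⟩
    have e := hT g 1 1 (φ.symm (t * lam 1))
    simp only [one_mul, mul_one, map_one, AlgEquiv.apply_symm_apply, Units.mul_inv_cancel_right,
      map_mul] at e
    rw [hα g 1, mul_one] at e
    -- both sides of `e` now end in the same unit `w`
    have hw : IsUnit (φ (η₁ g (φ.symm (lam 1))) * φ (α₁ g 1) * ↑(lam g)⁻¹) :=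
      ((((lam 1).isUnit.map φ.symm).map (η₁ g)).map φ |>.mul ((α₁ g 1).isUnit.map φ)).mul
        (lam g)⁻¹.isUnit
    have key : φ (η₁ g (φ.symm t)) = ↑(lam g)⁻¹ * η₂ g t * lam g :=
      hw.mul_left_inj.mp (by simpa only [mul_assoc] using e)
    simp [key, mul_assoc]
  · rintro ⟨hη, hα⟩ x y r s
    dsimp only
    have hcancel : ∀ z : R,
        φ (η₁ x (φ.symm ↑(lam y)⁻¹)) * (φ (η₁ x (φ.symm (lam y))) * z) = z := fun z => by
      rw [← mul_assoc, ← map_mul, ← map_mul, ← map_mul, Units.inv_mul]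
      simp
    rw [map_mul (η₂ x), hη x (φ s), hη x ↑(lam y)⁻¹, hα x y, AlgEquiv.symm_apply_apply,
      map_mul φ, map_mul φ]
    simp only [mul_assoc, Units.inv_mul_cancel_left]
    rw [hcancel]

end GradedHom

section CrossedProduct

variable {F R G : Type*} [Field F] [Ring R] [Algebra F R] [Group G]

lemma mulCP_single_single (α : G → G → Rˣ) (η : G → R ≃ₐ[F] R) (x y : G) (r s : R) :
    mulCP F α η (single x r) (single y s) = single (x * y) (r * η x s * α x y) := by
  simp [mulCP]

lemma mulCP_zero_left (α : G → G → Rˣ) (η : G → R ≃ₐ[F] R) (b : G →₀ R) :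
    mulCP F α η 0 b = 0 := by
  simp [mulCP]

lemma mulCP_zero_right (α : G → G → Rˣ) (η : G → R ≃ₐ[F] R) (a : G →₀ R) :
    mulCP F α η a 0 = 0 := by
  simp [mulCP]

lemma mulCP_add_left (α : G → G → Rˣ) (η : G → R ≃ₐ[F] R) (a₁ a₂ b : G →₀ R) :
    mulCP F α η (a₁ + a₂) b = mulCP F α η a₁ b + mulCP F α η a₂ b :=
  sum_add_index' (by simp) fun _ _ _ => by simp [add_mul, single_add, sum_add]

lemma mulCP_add_right (α : G → G → Rˣ) (η : G → R ≃ₐ[F] R) (a b₁ b₂ : G →₀ R) :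
    mulCP F α η a (b₁ + b₂) = mulCP F α η a b₁ + mulCP F α η a b₂ := by
  rw [mulCP, mulCP, mulCP, ← sum_add]
  exact sum_congr fun x _ => sum_add_index' (by simp) fun _ _ _ => by
    simp [mul_add, add_mul, single_add]

lemma Compatible.eta_one {α : G → G → Rˣ} {η : G → R ≃ₐ[F] R} (h : Compatible F α η)
    (r : R) : η 1 r = α 1 1 * r * ↑(α 1 1)⁻¹ := by
  simpa using h.2 1 1 ((η 1).symm r)

lemma Compatible.alpha_one_left {α : G → G → Rˣ} {η : G → R ≃ₐ[F] R} (h : Compatible F α η)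
    (y : G) : α 1 y = α 1 1 := by
  have h1 := h.1 1 1 y
  rw [one_mul, one_mul, h.eta_one] at h1
  have hu : α 1 1 * α 1 y = α 1 1 * α 1 y * ((α 1 1)⁻¹ * α 1 y) :=
    Units.ext (by push_cast; rw [← mul_assoc]; exact h1)
  exact (inv_mul_eq_one.mp (left_eq_mul.mp hu)).symm

end CrossedProduct

section CrossedProductHom

variable {F R G : Type*} [Field F] [Ring R] [Algebra F R] [Group G]
  {α₁ α₂ : G → G → Rˣ} {η₁ η₂ : G → R ≃ₐ[F] R}

lemma map_mulCP_iff (ψ : (G →₀ R) →+ (G →₀ R)) (T : G → R → R)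
    (hψ : ∀ g r, ψ (single g r) = single g (T g r)) :
    (∀ a b, ψ (mulCP F α₁ η₁ a b) = mulCP F α₂ η₂ (ψ a) (ψ b)) ↔
      IsGradedHomCP α₁ η₁ α₂ η₂ T := by
  refine ⟨fun h x y r s => ?_, fun h a b => ?_⟩
  · have e := h (single x r) (single y s)
    rw [mulCP_single_single, hψ, hψ, hψ, mulCP_single_single] at e
    exact single_injective _ e
  induction a using Finsupp.induction_linear with
  | zero => simp [mulCP_zero_left]
  | add a₁ a₂ ih₁ ih₂ => rw [mulCP_add_left, map_add, ih₁, ih₂, map_add, mulCP_add_left]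
  | single x r =>
    induction b using Finsupp.induction_linear with
    | zero => simp [mulCP_zero_right]
    | add b₁ b₂ ih₁ ih₂ => rw [mulCP_add_right, map_add, ih₁, ih₂, map_add, mulCP_add_right]
    | single y s => rw [mulCP_single_single, hψ, hψ, hψ, mulCP_single_single, h]

lemma IsGradedHomCP.apply_mul {T : G → R → R} (h₁ : Compatible F α₁ η₁)
    (h₂ : Compatible F α₂ η₂) (hT : IsGradedHomCP α₁ η₁ α₂ η₂ T) (y : G) (r s : R) :
    T y (r * s) = T 1 (r * ↑(α₁ 1 1)⁻¹) * α₂ 1 1 * T y s := by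
  have e := hT 1 y (r * ↑(α₁ 1 1)⁻¹) s
  rw [one_mul, h₁.alpha_one_left y, h₂.alpha_one_left y, h₁.eta_one, h₂.eta_one] at e
  simpa [mul_assoc] using e

lemma IsGradedHomCP.exists_eq_mul_inv (h₁ : Compatible F α₁ η₁) (h₂ : Compatible F α₂ η₂)
    (T : G → R ≃ₗ[F] R) (hT : IsGradedHomCP α₁ η₁ α₂ η₂ fun g => T g) :
    ∃ (lam : G → Rˣ) (φ : R ≃ₐ[F] R), ∀ g r, T g r = φ r * ↑(lam g)⁻¹ := by
  have hmul := hT.apply_mul h₁ h₂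
  let φ₀ : R ≃ₗ[F] R := ((α₁ 1 1)⁻¹.mulRightLinearEquiv F).trans
    ((T 1).trans ((α₂ 1 1).mulRightLinearEquiv F))
  have hφ₀ : ∀ r, φ₀ r = T 1 (r * ↑(α₁ 1 1)⁻¹) * α₂ 1 1 := fun r => rfl
  have map_mul : ∀ r s, φ₀ (r * s) = φ₀ r * φ₀ s := fun r s => by
    rw [hφ₀, hφ₀, hφ₀, mul_assoc, hmul, mul_assoc]
  have map_one : φ₀ 1 = 1 := by
    obtain ⟨r, hr⟩ := (T 1).surjective 1
    simpa [hr, hφ₀] using (hmul 1 1 r).symm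
  let φ := AlgEquiv.ofLinearEquiv φ₀ map_one map_mul
  have hTφ : ∀ g r, T g r = φ r * T g 1 := fun g r => by
    have := hmul g r 1
    rwa [mul_one] at this
  have hunit : ∀ g, IsUnit (T g 1) := fun g => by
    have hcomp : (· * T g 1) = T g ∘ φ.symm := funext fun t => by simp [hTφ g (φ.symm t)]
    exact IsUnit.isUnit_iff_mulRight_bijective.mpr
      (hcomp ▸ (T g).bijective.comp φ.symm.bijective)
  exact ⟨fun g => (hunit g).unit⁻¹, φ, fun g r => by simp [hTφ g r]⟩

end CrossedProductHom

/-- Two crossed products `R^{α₁}_{η₁}G` and `R^{α₂}_{η₂}G` are graded isomorphic iff there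
exist `λ : G → Rˣ` and `φ ∈ Aut_F(R)` such that `η₂(g) = ι_{λ(g)} ∘ φ ∘ η₁(g) ∘ φ⁻¹` and
`α₂(g,h) = λ(g) φ(η₁(g)(φ⁻¹(λ(h)))) φ(α₁(g,h)) λ(gh)⁻¹`. -/
theorem stmt_9 {F R G : Type*} [Field F] [Ring R] [Algebra F R] [Group G]
    (α₁ α₂ : G → G → Rˣ) (η₁ η₂ : G → R ≃ₐ[F] R)
    (h₁ : Compatible F α₁ η₁) (h₂ : Compatible F α₂ η₂) :
    (∃ ψ : (G →₀ R) ≃ₗ[F] (G →₀ R),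
        (∀ a b : G →₀ R, ψ (mulCP F α₁ η₁ a b) = mulCP F α₂ η₂ (ψ a) (ψ b)) ∧
        (∀ (g : G) (r : R), ∃ s : R, ψ (Finsupp.single g r) = Finsupp.single g s)) ↔
    ∃ (lam : G → Rˣ) (φ : R ≃ₐ[F] R),
      (∀ (g : G) (r : R),
        η₂ g r = (lam g : R) * φ (η₁ g (φ.symm r)) * ((lam g)⁻¹ : Rˣ)) ∧
      (∀ g h : G,
        (α₂ g h : R) =
          (lam g : R) * φ (η₁ g (φ.symm (lam h))) * φ (α₁ g h) *
            ((lam (g * h))⁻¹ : Rˣ)) := by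
  constructor
  · rintro ⟨ψ, hmul, hgraded⟩
    obtain ⟨T, hψT⟩ := ψ.exists_components_of_graded hgraded
    have hT := (map_mulCP_iff (ψ : (G →₀ R) →+ (G →₀ R)) _ hψT).mp hmul
    obtain ⟨lam, φ, hTφ⟩ := hT.exists_eq_mul_inv h₁ h₂
    refine ⟨lam, φ, (isGradedHomCP_mul_inv_iff lam φ).mp ?_⟩
    have hTfun : (fun g => ⇑(T g)) = fun g r => φ r * ↑(lam g)⁻¹ :=
      funext fun g => funext (hTφ g)
    rwa [hTfun] at hT
  · rintro ⟨lam, φ, hη, hα⟩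
    let e g : R ≃ₗ[F] R := φ.toLinearEquiv.trans ((lam g)⁻¹.mulRightLinearEquiv F)
    have he : ∀ g r, gradedLinearEquiv e (single g r) = single g (φ r * ↑(lam g)⁻¹) :=
      gradedLinearEquiv_single e
    refine ⟨gradedLinearEquiv e, ?_, fun g r => ⟨_, he g r⟩⟩
    exact (map_mulCP_iff (gradedLinearEquiv e : (G →₀ R) →+ (G →₀ R)) _ he).mpr
      ((isGradedHomCP_mul_inv_iff lam φ).mpr ⟨hη, hα⟩)
end
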